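/- Let 0 ≤ F∧ ≤ F∨ be nondecreasing functions on [0,∞) with F∨(λ)/F∧(λ) → 1 as λ → ∞ and F∧ > 0 eventually, and suppose ℱ∧(t) := ∫₀^∞ F∧(λ) t e^{-tλ} dλ → ∞ as t ↓ 0. Then ℱ∨(t)/ℱ∧(t) → 1 as t ↓ 0, where ℱ∨(t) := ∫₀^∞ F∨(λ) t e^{-tλ} dλ. -/

import Mathlib

/-!
Split the integral for `ℱ∨` at a point `Λ` beyond which `F∨ ≤ (1 + δ) F∧`. On `(0, Λ]` the
integrand is bounded by `F∨(Λ)` once `t ≤ 1`, so that piece stays bounded as `t → 0⁺`, while the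
tail is at most `(1 + δ) ℱ∧(t)`. Since `ℱ∧(t) → ∞`, this gives `1 ≤ ℱ∨/ℱ∧ ≤ 1 + δ + o(1)`.
-/

open MeasureTheory Filter Set Topology
open scoped ENNReal

/-- The paper's `ℱ(t) = ∫₀^∞ F(λ) t e^{-tλ} dλ`; `ENNReal.ofReal` clips negative integrands. -/
noncomputable def abelMean (F : ℝ → ℝ) (t : ℝ) : ℝ≥0∞ :=
  ∫⁻ lam in Ioi 0, ENNReal.ofReal (F lam * t * Real.exp (-t * lam))

theorem Filter.Tendsto.eventually_le_mul_of_div_tendsto_one {α : Type*} {l : Filter α}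
    {f g : α → ℝ} (hfg : Tendsto (fun x => f x / g x) l (𝓝 1)) (hg : ∀ᶠ x in l, 0 ≤ g x)
    {c : ℝ} (hc : 1 < c) : ∀ᶠ x in l, f x ≤ c * g x := by
  filter_upwards [hfg.eventually (Ioo_mem_nhds zero_lt_one hc), hg] with x ⟨hpos, hlt⟩ hgx
  have hgx : 0 < g x := hgx.lt_of_ne fun h => by simp [← h] at hpos
  exact ((div_lt_iff₀ hgx).1 hlt).le

theorem tendsto_div_nhds_one_of_le_of_le_add_mul {α : Type*} {l : Filter α} {a b : α → ℝ}
    (ha : Tendsto a l atTop) (hab : ∀ᶠ x in l, a x ≤ b x)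
    (hb : ∀ c > 1, ∃ C, ∀ᶠ x in l, b x ≤ C + c * a x) :
    Tendsto (fun x => b x / a x) l (𝓝 1) := by
  refine tendsto_order.2 ⟨fun u hu => ?_, fun u hu => ?_⟩
  · filter_upwards [hab, ha.eventually_gt_atTop 0] with x hx ha0
    exact hu.trans_le ((one_le_div ha0).2 hx)
  · obtain ⟨C, hC⟩ := hb ((1 + u) / 2) (by linarith)
    have hsmall : ∀ᶠ x in l, C / a x < (u - 1) / 2 :=
      (tendsto_const_nhds.div_atTop ha).eventually (gt_mem_nhds (by linarith))
    filter_upwards [hC, hsmall, ha.eventually_gt_atTop 0] with x hx hxs ha0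
    calc b x / a x ≤ (C + (1 + u) / 2 * a x) / a x := by gcongr
      _ = C / a x + (1 + u) / 2 := by field_simp
      _ < u := by linarith

theorem ENNReal.tendsto_toReal_atTop {α : Type*} {l : Filter α} {a : α → ℝ≥0∞}
    (ha : Tendsto a l (𝓝 ∞)) (hfin : ∀ᶠ x in l, a x ≠ ∞) :
    Tendsto (fun x => (a x).toReal) l atTop := by
  refine tendsto_atTop.2 fun M => ?_
  filter_upwards [ha.eventually (eventually_gt_nhds (ENNReal.ofReal_lt_top (r := M))), hfin]
    with x hx hxfin
  exact (ENNReal.ofReal_le_iff_le_toReal hxfin).1 hx.le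

theorem ENNReal.toReal_le_add_ofReal_mul {a b C : ℝ≥0∞} {c : ℝ} (hc : 0 ≤ c) (ha : a ≠ ∞)
    (hC : C ≠ ∞) (h : b ≤ C + ENNReal.ofReal c * a) : b.toReal ≤ C.toReal + c * a.toReal := by
  have h' := ENNReal.toReal_mono (by finiteness) h
  rwa [ENNReal.toReal_add hC (by finiteness), ENNReal.toReal_mul, ENNReal.toReal_ofReal hc] at h'

theorem ENNReal.tendsto_toReal_div_nhds_one {α : Type*} {l : Filter α} {a b : α → ℝ≥0∞}
    (ha : Tendsto a l (𝓝 ∞)) (hfin : ∀ᶠ x in l, a x ≠ ∞) (hab : ∀ᶠ x in l, a x ≤ b x)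
    (hb : ∀ c > 1, ∃ C ≠ ∞, ∀ᶠ x in l, b x ≤ C + ENNReal.ofReal c * a x) :
    Tendsto (fun x => (b x).toReal / (a x).toReal) l (𝓝 1) := by
  have hbfin : ∀ᶠ x in l, b x ≠ ∞ := by
    obtain ⟨C, hC, hCb⟩ := hb 2 (by norm_num)
    filter_upwards [hCb, hfin] with x hx hxfin
    exact ne_top_of_le_ne_top (by finiteness) hx
  refine tendsto_div_nhds_one_of_le_of_le_add_mul (ENNReal.tendsto_toReal_atTop ha hfin) ?_
    fun c hc => ?_
  · filter_upwards [hab, hbfin] with x hx hxfin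
    exact ENNReal.toReal_mono hxfin hx
  · obtain ⟨C, hC, hCb⟩ := hb c hc
    refine ⟨C.toReal, ?_⟩
    filter_upwards [hCb, hfin] with x hx hxfin
    exact ENNReal.toReal_le_add_ofReal_mul (by linarith) hxfin hC hx

theorem abelMean_mono {F G : ℝ → ℝ} {t : ℝ} (hFG : ∀ lam > 0, F lam ≤ G lam) (ht : 0 ≤ t) :
    abelMean F t ≤ abelMean G t :=
  setLIntegral_mono' measurableSet_Ioi fun lam hlam =>
    ENNReal.ofReal_le_ofReal (by gcongr; exact hFG lam hlam)

theorem abelMean_le_add_mul {F G : ℝ → ℝ} {Λ c t : ℝ} (hF : MonotoneOn F (Ici 0)) (hΛ : 0 ≤ Λ)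
    (hc : 0 ≤ c) (hFG : ∀ lam > Λ, F lam ≤ c * G lam) (ht₀ : 0 ≤ t) (ht₁ : t ≤ 1) :
    abelMean F t ≤ ENNReal.ofReal (F Λ) * ENNReal.ofReal Λ + ENNReal.ofReal c * abelMean G t := by
  unfold abelMean
  conv_lhs =>
    rw [← Ioc_union_Ioi_eq_Ioi hΛ, lintegral_union measurableSet_Ioi Ioc_disjoint_Ioi_same]
  gcongr ?_ + ?_
  · calc ∫⁻ lam in Ioc 0 Λ, ENNReal.ofReal (F lam * t * Real.exp (-t * lam))
        ≤ ∫⁻ _ in Ioc 0 Λ, ENNReal.ofReal (F Λ) := setLIntegral_mono' measurableSet_Ioc ?_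
      _ = ENNReal.ofReal (F Λ) * ENNReal.ofReal Λ := by
        rw [setLIntegral_const, Real.volume_Ioc, sub_zero]
    intro lam ⟨hlam₀, hlamΛ⟩
    have hkernel : t * Real.exp (-t * lam) ≤ 1 :=
      mul_le_one₀ ht₁ (Real.exp_nonneg _) (Real.exp_le_one_iff.2 (by nlinarith))
    calc ENNReal.ofReal (F lam * t * Real.exp (-t * lam))
        = ENNReal.ofReal (F lam) * ENNReal.ofReal (t * Real.exp (-t * lam)) := by
          rw [mul_assoc, ENNReal.ofReal_mul' (by positivity)]
      _ ≤ ENNReal.ofReal (F Λ) * ENNReal.ofReal 1 := by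
          gcongr
          exact hF hlam₀.le (mem_Ici.2 hΛ) hlamΛ
      _ = ENNReal.ofReal (F Λ) := by rw [ENNReal.ofReal_one, mul_one]
  · calc ∫⁻ lam in Ioi Λ, ENNReal.ofReal (F lam * t * Real.exp (-t * lam))
        ≤ ∫⁻ lam in Ioi Λ, ENNReal.ofReal c * ENNReal.ofReal (G lam * t * Real.exp (-t * lam)) := by
          refine setLIntegral_mono' measurableSet_Ioi fun lam hlam => ?_
          rw [← ENNReal.ofReal_mul hc, ← mul_assoc, ← mul_assoc]
          exact ENNReal.ofReal_le_ofReal (by gcongr; exact hFG lam hlam)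
      _ = ENNReal.ofReal c * ∫⁻ lam in Ioi Λ, ENNReal.ofReal (G lam * t * Real.exp (-t * lam)) :=
          lintegral_const_mul' _ _ ENNReal.ofReal_ne_top
      _ ≤ _ := by gcongr

theorem stmt_17_general (Fwedge Fvee : ℝ → ℝ)
    (hv : MonotoneOn Fvee (Set.Ici 0))
    (hwnn : ∀ lam ≥ (0:ℝ), 0 ≤ Fwedge lam)
    (hle : ∀ lam ≥ (0:ℝ), Fwedge lam ≤ Fvee lam)
    (hratio : Filter.Tendsto (fun lam => Fvee lam / Fwedge lam) Filter.atTop (nhds 1))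
    (LFw LFv : ℝ → ENNReal)
    (hLFw : ∀ t, LFw t
      = ∫⁻ lam in Set.Ioi (0:ℝ), ENNReal.ofReal (Fwedge lam * t * Real.exp (-t * lam)))
    (hLFv : ∀ t, LFv t
      = ∫⁻ lam in Set.Ioi (0:ℝ), ENNReal.ofReal (Fvee lam * t * Real.exp (-t * lam)))
    (hfinw : ∀ t > (0:ℝ), LFw t < ⊤)
    (hinf : Filter.Tendsto LFw (nhdsWithin 0 (Set.Ioi 0)) (nhds ⊤)) :
    Filter.Tendsto (fun t => (LFv t).toReal / (LFw t).toReal)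
      (nhdsWithin 0 (Set.Ioi 0)) (nhds 1) := by
  obtain rfl : LFw = abelMean Fwedge := funext hLFw
  obtain rfl : LFv = abelMean Fvee := funext hLFv
  have hsmall : ∀ᶠ t in 𝓝[>] (0 : ℝ), t ∈ Ioc 0 1 := Ioc_mem_nhdsGT one_pos
  refine ENNReal.tendsto_toReal_div_nhds_one hinf ?_ ?_ fun c hc => ?_
  · filter_upwards [self_mem_nhdsWithin] with t ht using (hfinw t ht).ne
  · filter_upwards [self_mem_nhdsWithin] with t ht
    exact abelMean_mono (fun lam hlam => hle lam hlam.le) ht.le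
  · have hdom := hratio.eventually_le_mul_of_div_tendsto_one
      (eventually_ge_atTop 0 |>.mono hwnn) hc
    obtain ⟨Λ, hΛ⟩ := eventually_atTop.1 (hdom.and (eventually_ge_atTop 0))
    refine ⟨ENNReal.ofReal (Fvee Λ) * ENNReal.ofReal Λ, by finiteness, ?_⟩
    filter_upwards [hsmall] with t ⟨ht₀, ht₁⟩
    exact abelMean_le_add_mul hv (hΛ Λ le_rfl).2 (by linarith)
      (fun lam hlam => (hΛ lam hlam.le).1) ht₀.le ht₁

theorem stmt_17 (Fwedge Fvee : ℝ → ℝ)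
    (hw : MonotoneOn Fwedge (Set.Ici 0)) (hv : MonotoneOn Fvee (Set.Ici 0))
    (hwnn : ∀ lam ≥ (0:ℝ), 0 ≤ Fwedge lam)
    (hle : ∀ lam ≥ (0:ℝ), Fwedge lam ≤ Fvee lam)
    (lam₁ : ℝ) (hpos : ∀ lam ≥ lam₁, 0 < Fwedge lam)
    (hratio : Filter.Tendsto (fun lam => Fvee lam / Fwedge lam) Filter.atTop (nhds 1))
    (LFw LFv : ℝ → ENNReal)
    (hLFw : ∀ t, LFw t
      = ∫⁻ lam in Set.Ioi (0:ℝ), ENNReal.ofReal (Fwedge lam * t * Real.exp (-t * lam)))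
    (hLFv : ∀ t, LFv t
      = ∫⁻ lam in Set.Ioi (0:ℝ), ENNReal.ofReal (Fvee lam * t * Real.exp (-t * lam)))
    (hfinw : ∀ t > (0:ℝ), LFw t < ⊤) (hfinv : ∀ t > (0:ℝ), LFv t < ⊤)
    (hinf : Filter.Tendsto LFw (nhdsWithin 0 (Set.Ioi 0)) (nhds ⊤)) :
    Filter.Tendsto (fun t => (LFv t).toReal / (LFw t).toReal)
      (nhdsWithin 0 (Set.Ioi 0)) (nhds 1) :=
  stmt_17_general Fwedge Fvee hv hwnn hle hratio LFw LFv hLFw hLFv hfinw hinf
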